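/- arXiv:2202.10378 — 4 statements merged into one kernel-verified Lean document; each statement's English description precedes it below -/
import Mathlib

section
/- Let v = (v₁,v₂) with v₁ ≥ v₂ ≥ 0, let X ⊆ [0,1]×ℝ, and let b ∈ ℝ. If (a',t') ∈ Ch(X;v₂) with t' > b, then for any (a,t) ∈ X with t ≤ b we have v₁·a' − t' ≥ v₁·a − t, with strict inequality if v₁ > v₂. -/
def Ch (X : Set (ℝ × ℝ)) (v : ℝ) : Set (ℝ × ℝ) :=
  {p ∈ X | ∀ q ∈ X, v * p.1 - p.2 ≥ v * q.1 - q.2}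

theorem stmt1 (X : Set (ℝ × ℝ)) (b v₁ v₂ a t a' t' : ℝ)
    (hv : v₁ ≥ v₂) (hv2 : 0 ≤ v₂)
    (h' : (a', t') ∈ Ch X v₂) (ht' : t' > b)
    (h : (a, t) ∈ X) (ht : t ≤ b) :
    v₁ * a' - t' ≥ v₁ * a - t ∧ (v₁ > v₂ → v₁ * a' - t' > v₁ * a - t) := by
  obtain ⟨_, hmax⟩ := h'
  have h1 := hmax (a, t) h
  simp only at h1
  have ha : a' > a := by
    rcases lt_or_eq_of_le hv2 with h2 | h2
    · nlinarith
    · nlinarith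
  constructor
  · nlinarith
  · intro hlt; nlinarith
end

section
/- Suppose x(1 − F₁(x)) is strictly concave on [0,β] and b ≥ κ̃₁ := argmax_{x∈[0,β]} x(1−F₁(x)), and F₁ ≤ F₂ pointwise. Then every post-2 mechanism (κ₁,κ₂) with b ≤ κ₁ ≤ κ₂ ≤ β has expected revenue b(1−F₁(κ₁)) + (1−b/κ₁)κ₂(1−F₂(κ₂)) at most the optimal post-1 revenue max_{x∈[0,b]} x(1 − F₁(x)) = κ̃₁(1 − F₁(κ̃₁)). -/
/-! Writing `t = b / κ₁ ∈ [0, 1]`, the post-2 revenue is the convex combination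
`t · κ₁(1 - F₁ κ₁) + (1 - t) · κ₂(1 - F₂ κ₂)`. By stochastic dominance the second revenue is at
most `κ₂(1 - F₁ κ₂)`, so both terms are post-1 revenues at prices in `[0, β]`, bounded by the
optimal one. -/

lemma mul_add_one_sub_div_mul_le {b κ p r M : ℝ} (hb : 0 ≤ b) (hbκ : b ≤ κ)
    (hp : κ * p ≤ M) (hr : r ≤ M) : b * p + (1 - b / κ) * r ≤ M := by
  rcases (hb.trans hbκ).eq_or_lt with rfl | hκ
  · simpa [le_antisymm hbκ hb] using hr
  have ht₀ : 0 ≤ b / κ := div_nonneg hb hκ.le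
  have ht₁ : b / κ ≤ 1 := (div_le_one hκ).2 hbκ
  calc b * p + (1 - b / κ) * r = b / κ * (κ * p) + (1 - b / κ) * r := by
        field_simp
    _ ≤ b / κ * M + (1 - b / κ) * M := by gcongr
    _ = M := by ring

theorem stmt9_general (β b κ₁ κ₂ κt₁ : ℝ) (F₁ F₂ : ℝ → ℝ)
    (hmax : ∀ x ∈ Set.Icc (0 : ℝ) β, x * (1 - F₁ x) ≤ κt₁ * (1 - F₁ κt₁))
    (hFOSD : ∀ x, F₁ x ≤ F₂ x)
    (hb : 0 < b)
    (h1 : b ≤ κ₁) (h12 : κ₁ ≤ κ₂) (h2 : κ₂ ≤ β) :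
    b * (1 - F₁ κ₁) + (1 - b / κ₁) * (κ₂ * (1 - F₂ κ₂)) ≤
      κt₁ * (1 - F₁ κt₁) := by
  have hκ₁ : 0 ≤ κ₁ := hb.le.trans h1
  have hκ₂ : 0 ≤ κ₂ := hκ₁.trans h12
  refine mul_add_one_sub_div_mul_le hb.le h1 (hmax κ₁ ⟨hκ₁, h12.trans h2⟩) ?_
  calc κ₂ * (1 - F₂ κ₂) ≤ κ₂ * (1 - F₁ κ₂) := by gcongr; exact hFOSD κ₂
    _ ≤ κt₁ * (1 - F₁ κt₁) := hmax κ₂ ⟨hκ₂, h2⟩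

theorem stmt9 (β b κ₁ κ₂ κt₁ : ℝ) (F₁ F₂ : ℝ → ℝ)
    (hconc : StrictConcaveOn ℝ (Set.Icc 0 β) (fun x => x * (1 - F₁ x)))
    (hmem : κt₁ ∈ Set.Icc 0 β)
    (hmax : ∀ x ∈ Set.Icc (0 : ℝ) β, x * (1 - F₁ x) ≤ κt₁ * (1 - F₁ κt₁))
    (hFOSD : ∀ x, F₁ x ≤ F₂ x)
    (hb : 0 < b) (hbk : κt₁ ≤ b)
    (h1 : b ≤ κ₁) (h12 : κ₁ ≤ κ₂) (h2 : κ₂ ≤ β) :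
    b * (1 - F₁ κ₁) + (1 - b / κ₁) * (κ₂ * (1 - F₂ κ₂)) ≤
      κt₁ * (1 - F₁ κt₁) :=
  stmt9_general β b κ₁ κ₂ κt₁ F₁ F₂ hmax hFOSD hb h1 h12 h2
end

section
/- Suppose F₂ has density f₂ on [0,β] and satisfies single crossing: x − (1−F₂(x))/f₂(x) crosses zero exactly once, at κ̃₂. If the optimal interior post-2 cutoffs satisfy b < κ₁* < κ₂* < β, then κ₂* = κ̃₂, i.e., κ₂* solves x·f₂(x) = 1 − F₂(x), and κ₁* solves x²f₁(x) = κ₂*(1 − F₂(κ₂*)). -/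
theorem stmt13 (β b κt₂ κ₁s κ₂s : ℝ) (F₁ F₂ f₁ f₂ : ℝ → ℝ)
    (hb : 0 < b)
    (hF1 : ∀ x ∈ Set.Icc (0 : ℝ) β, HasDerivAt F₁ (f₁ x) x)
    (hF2 : ∀ x ∈ Set.Icc (0 : ℝ) β, HasDerivAt F₂ (f₂ x) x)
    (hconc : StrictConcaveOn ℝ (Set.Icc 0 β) (fun x => x * (1 - F₁ x)))
    (hκt₂ : κt₂ ∈ Set.Icc (0 : ℝ) β)
    (hSC : ∀ x ∈ Set.Icc (0 : ℝ) β,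
      (x < κt₂ → x * f₂ x - (1 - F₂ x) < 0) ∧
      (x > κt₂ → x * f₂ x - (1 - F₂ x) > 0) ∧
      (x = κt₂ → x * f₂ x - (1 - F₂ x) = 0))
    (hopt : ∀ κ₁ κ₂ : ℝ, b ≤ κ₁ → κ₁ ≤ κ₂ → κ₂ ≤ β →
      b * (1 - F₁ κ₁) + (1 - b / κ₁) * (κ₂ * (1 - F₂ κ₂)) ≤
        b * (1 - F₁ κ₁s) + (1 - b / κ₁s) * (κ₂s * (1 - F₂ κ₂s)))
    (hint : b < κ₁s ∧ κ₁s < κ₂s ∧ κ₂s < β) :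
    κ₂s * f₂ κ₂s = 1 - F₂ κ₂s ∧
    κ₁s ^ 2 * f₁ κ₁s = κ₂s * (1 - F₂ κ₂s) := by
  obtain ⟨hb1, h12, h2β⟩ := hint
  have h1pos : 0 < κ₁s := hb.trans hb1
  have h2pos : 0 < κ₂s := h1pos.trans h12
  have hc : 0 < 1 - b / κ₁s := by
    have : b / κ₁s < 1 := (div_lt_one h1pos).mpr hb1
    linarith
  -- FOC in κ₂
  have hmax2 : IsLocalMax (fun x => x * (1 - F₂ x)) κ₂s := by
    filter_upwards [Ioo_mem_nhds h12 h2β] with x hx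
    have h := hopt κ₁s x hb1.le hx.1.le hx.2.le
    exact le_of_mul_le_mul_left (by linarith) hc
  have hd2 : HasDerivAt (fun x => x * (1 - F₂ x))
      (1 * (1 - F₂ κ₂s) + κ₂s * (0 - f₂ κ₂s)) κ₂s :=
    (hasDerivAt_id κ₂s).mul ((hasDerivAt_const κ₂s (1:ℝ)).sub
      (hF2 κ₂s ⟨h2pos.le, h2β.le⟩))
  have hz2 := hmax2.hasDerivAt_eq_zero hd2
  have e2 : κ₂s * f₂ κ₂s = 1 - F₂ κ₂s := by linarith [hz2]
  refine ⟨e2, ?_⟩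
  -- FOC in κ₁
  set K := κ₂s * (1 - F₂ κ₂s) with hK
  have hmax1 : IsLocalMax (fun x => b * (1 - F₁ x) + (1 - b / x) * K) κ₁s := by
    filter_upwards [Ioo_mem_nhds hb1 h12] with x hx
    exact hopt x κ₂s hx.1.le hx.2.le h2β.le
  have hdiv : HasDerivAt (fun x : ℝ => b / x)
      ((0 * κ₁s - b * 1) / κ₁s ^ 2) κ₁s :=
    (hasDerivAt_const κ₁s b).div (hasDerivAt_id κ₁s) h1pos.ne'
  have hd1 : HasDerivAt (fun x => b * (1 - F₁ x) + (1 - b / x) * K)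
      (b * (0 - f₁ κ₁s) + (0 - (0 * κ₁s - b * 1) / κ₁s ^ 2) * K) κ₁s :=
    (((hasDerivAt_const κ₁s (1:ℝ)).sub (hF1 κ₁s ⟨h1pos.le, by linarith⟩)).const_mul b).add
      (((hasDerivAt_const κ₁s (1:ℝ)).sub hdiv).mul_const K)
  have hz1 := hmax1.hasDerivAt_eq_zero hd1
  have hκ2 : (κ₁s : ℝ) ^ 2 ≠ 0 := pow_ne_zero 2 h1pos.ne'
  field_simp at hz1
  nlinarith [hz1, sq_nonneg κ₁s]
end

section
/- Let the uniform post-2 revenue be r(κ) = b(1−F₁(κ)) + (κ−b)(1−F₂(κ)) on [b,β], with F₁,F₂ having densities f₁,f₂. If the interior maximizer κ* ∈ (b,β) satisfies the first-order condition and κ* ≥ κ̃₂ (where F₂ satisfies single crossing at κ̃₂), then κ* solves κ f₂(κ) − (1−F₂(κ)) = b(f₂(κ) − f₁(κ)) and moreover f₁(κ*) ≤ f₂(κ*). -/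
theorem stmt15 (β b κs κt₂ : ℝ) (F₁ F₂ f₁ f₂ : ℝ → ℝ)
    (hb : 0 < b) (hks : κs ∈ Set.Ioo b β)
    (hf2pos : 0 < f₂ κs)
    (hFOC : -b * f₁ κs + (1 - F₂ κs) - (κs - b) * f₂ κs = 0)
    (hSC : ∀ x ∈ Set.Icc (0 : ℝ) β, κt₂ ≤ x → x * f₂ x - (1 - F₂ x) ≥ 0)
    (hmem : κs ∈ Set.Icc (0 : ℝ) β)
    (hge : κt₂ ≤ κs) :
    κs * f₂ κs - (1 - F₂ κs) = b * (f₂ κs - f₁ κs) ∧ f₁ κs ≤ f₂ κs := by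
  have h1 : κs * f₂ κs - (1 - F₂ κs) = b * (f₂ κs - f₁ κs) := by linarith
  refine ⟨h1, ?_⟩
  have h2 := hSC κs hmem hge
  nlinarith
end
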